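/- For nonnegative integers $m, j, a, b, d$ with $1 \le j \le m$, $a \le j$, and $b \le d$, one has $\binom{m-j+a+b}{a+b}\binom{a+b}{a} \le \binom{m+d}{d}\binom{m}{j}$. -/

import Mathlib

/-!
Splitting off the `b` elements first, `C(n+a+b, a+b) C(a+b, a) = C(n+a+b, b) C(n+a, a)`.
Both factors have the shape `C(x+y, y)`, which is monotone in `x` and in `y`
(it equals `C(x+y, x)`); with `n = m - j` this bounds them by `C(m+d, d)` and
`C(m-j+j, j) = C(m, j)` respectively.
-/

namespace Nat

theorem add_choose_le_add_choose {x x' y y' : ℕ} (hx : x ≤ x') (hy : y ≤ y') :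
    (x + y).choose y ≤ (x' + y').choose y' :=
  calc (x + y).choose y ≤ (x' + y).choose y := choose_le_choose y (by omega)
    _ = (x' + y).choose x' := choose_symm_add.symm
    _ ≤ (x' + y').choose x' := choose_le_choose x' (by omega)
    _ = (x' + y').choose y' := choose_symm_add

theorem add_add_choose_mul_add_choose (n a b : ℕ) :
    (n + a + b).choose (a + b) * (a + b).choose a = (n + a + b).choose b * (n + a).choose a := by
  rw [choose_symm_add, choose_mul (le_add_left b a), Nat.add_sub_cancel, Nat.add_sub_cancel]

end Nat

theorem stmt_4_general (m j a b d : ℕ) (hjm : j ≤ m) (haj : a ≤ j) (hbd : b ≤ d) :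
    Nat.choose (m - j + a + b) (a + b) * Nat.choose (a + b) a
      ≤ Nat.choose (m + d) d * Nat.choose m j := by
  rw [Nat.add_add_choose_mul_add_choose]
  have hj : (m - j + a).choose a ≤ m.choose j := by
    simpa only [Nat.sub_add_cancel hjm] using Nat.add_choose_le_add_choose (le_refl (m - j)) haj
  exact Nat.mul_le_mul (Nat.add_choose_le_add_choose (by omega) hbd) hj

theorem stmt_4 (m j a b d : ℕ) (hj1 : 1 ≤ j) (hjm : j ≤ m) (haj : a ≤ j) (hbd : b ≤ d) :
    Nat.choose (m - j + a + b) (a + b) * Nat.choose (a + b) a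
      ≤ Nat.choose (m + d) d * Nat.choose m j :=
  stmt_4_general m j a b d hjm haj hbd
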